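/- Let n ≥ 3 and let Δ be an integer with 0 ≤ Δ < n. Then M_Δ(n,2) = ((n−1)/2)·⌊n/(Δ+1)⌋ if n is odd and Δ ≤ (n−3)/2; M_Δ(n,2) = (n/2 − 1)·⌊n/(Δ+1)⌋ + ⌊n/(2Δ+2)⌋ if n is even and Δ ≤ (n−2)/2; and M_Δ(n,2) = ⌊n/2⌋ otherwise (i.e., when Δ ≥ ⌊n/2⌋). -/

import Mathlib

/-- Cyclic cross-correlation of two sequences `X, Y : ZMod n → ℕ` at shift `τ`:
`Σ_{i=0}^{n-1} X(i) * (R^τ Y)(i)` where `(R^τ Y)(i) = Y(i - τ)`. -/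
def corr (n : ℕ) (X Y : ZMod n → ℕ) (τ : ℕ) : ℕ :=
  ∑ i ∈ Finset.range n, X (i : ZMod n) * Y ((i : ZMod n) - (τ : ZMod n))

/-- Hamming cross-correlation with respect to `Δ`:
`H_Δ(X,Y) = max_{0 ≤ τ ≤ Δ} Σ_i X(i) (R^τ Y)(i)`. -/
def Hcorr (n Δ : ℕ) (X Y : ZMod n → ℕ) : ℕ :=
  (Finset.range (Δ + 1)).sup (corr n X Y)

/-- Characteristic set `I_X = {t ∈ Z_n : X(t) = 1}` (as a finite set). -/
def Iset (n : ℕ) (X : ZMod n → ℕ) : Finset (ZMod n) :=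
  ((Finset.range n).image (fun (i : ℕ) => (i : ZMod n))).filter (fun t => X t = 1)

/-- `X` is a binary sequence of length `n` and weight `k`, i.e. `X ∈ S(n,k)`. -/
def IsSeq (n k : ℕ) (X : ZMod n → ℕ) : Prop :=
  (∀ i, X i = 0 ∨ X i = 1) ∧ (Iset n X).card = k

/-- `C ∈ PCAC_Δ(n,k)` : a partially conflict-avoiding code with respect to `Δ`,
of length `n` and weight `k`. -/
def IsPCAC (n k Δ : ℕ) (C : Finset (ZMod n → ℕ)) : Prop :=
  (∀ X ∈ C, IsSeq n k X) ∧
  ∀ X ∈ C, ∀ Y ∈ C, X ≠ Y → Hcorr n Δ X Y ≤ 1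

/-- `M_Δ(n,k)`: the maximum size of a code in `PCAC_Δ(n,k)`. -/
noncomputable def Mpart (n k Δ : ℕ) : ℕ :=
  sSup {m | ∃ C : Finset (ZMod n → ℕ), IsPCAC n k Δ C ∧ C.card = m}

/-- A conflict-avoiding code: `H(X,Y) = H_{n-1}(X,Y) = 1` for distinct codewords. -/
def IsCAC (n k : ℕ) (C : Finset (ZMod n → ℕ)) : Prop :=
  (∀ X ∈ C, IsSeq n k X) ∧
  ∀ X ∈ C, ∀ Y ∈ C, X ≠ Y → Hcorr n (n - 1) X Y = 1

/-- `M(n,k)`: the maximum size of a conflict-avoiding code of length `n`, weight `k`. -/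
noncomputable def Mfull (n k : ℕ) : ℕ :=
  sSup {m | ∃ C : Finset (ZMod n → ℕ), IsCAC n k C ∧ C.card = m}

open Finset

set_option linter.unusedSectionVars false

section Basics
variable {n : ℕ} [NeZero n]

lemma finset_pair_eq_pair_iff {a b c d : ZMod n} :
    ({a, b} : Finset (ZMod n)) = {c, d} ↔ (a = c ∧ b = d) ∨ (a = d ∧ b = c) := by
  rw [← Finset.coe_inj]
  push_cast
  exact Set.pair_eq_pair_iff

lemma cast_nat_inj {x y : ℕ} (hx : x < n) (hy : y < n) (h : (x : ZMod n) = y) : x = y := by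
  have h2 := (ZMod.natCast_eq_natCast_iff' x y n).1 h
  rwa [Nat.mod_eq_of_lt hx, Nat.mod_eq_of_lt hy] at h2

lemma pair_cast_eq_iff {x1 x2 y1 y2 : ℕ} :
    ({(x1 : ZMod n), (x2 : ZMod n)} : Finset (ZMod n)) = {(y1 : ZMod n), (y2 : ZMod n)} ↔
      ((x1 % n = y1 % n ∧ x2 % n = y2 % n) ∨ (x1 % n = y2 % n ∧ x2 % n = y1 % n)) := by
  rw [finset_pair_eq_pair_iff]
  simp only [ZMod.natCast_eq_natCast_iff', Nat.ModEq]

lemma image_pair {a b τ : ZMod n} :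
    ({a, b} : Finset (ZMod n)).image (· + τ) = {a + τ, b + τ} := by
  simp [Finset.image_insert]

lemma mem_Iset {X : ZMod n → ℕ} {t : ZMod n} : t ∈ Iset n X ↔ X t = 1 := by
  unfold Iset
  simp only [Finset.mem_filter, Finset.mem_image, Finset.mem_range, and_iff_right_iff_imp]
  intro _
  exact ⟨t.val, t.val_lt, ZMod.natCast_zmod_val t⟩

lemma sum_univ_eq_sum_range (f : ZMod n → ℕ) :
    ∑ t : ZMod n, f t = ∑ i ∈ Finset.range n, f (i : ZMod n) := by
  have himg : (Finset.range n).image (fun i : ℕ => (i : ZMod n)) = Finset.univ := by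
    apply Finset.eq_univ_iff_forall.2
    intro t
    exact Finset.mem_image.2 ⟨t.val, Finset.mem_range.2 t.val_lt, ZMod.natCast_zmod_val t⟩
  rw [← himg, Finset.sum_image]
  intro i hi j hj h
  exact cast_nat_inj (Finset.mem_range.1 hi) (Finset.mem_range.1 hj) h

end Basics

section Bridge
variable {n : ℕ} [NeZero n]

lemma corr_eq_card {X Y : ZMod n → ℕ} (hX : ∀ i, X i = 0 ∨ X i = 1)
    (hY : ∀ i, Y i = 0 ∨ Y i = 1) (τ : ℕ) :
    corr n X Y τ = ((Iset n X) ∩ (Iset n Y).image (· + (τ : ZMod n))).card := by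
  unfold corr
  rw [← sum_univ_eq_sum_range (fun t => X t * Y (t - (τ : ZMod n)))]
  have : ∀ t : ZMod n, X t * Y (t - (τ : ZMod n)) =
      if t ∈ (Iset n X) ∩ (Iset n Y).image (· + (τ : ZMod n)) then 1 else 0 := by
    intro t
    have hmem : t ∈ (Iset n X) ∩ (Iset n Y).image (· + (τ : ZMod n)) ↔
        X t = 1 ∧ Y (t - (τ : ZMod n)) = 1 := by
      simp only [Finset.mem_inter, Finset.mem_image, mem_Iset]
      constructor
      · rintro ⟨h1, s, hs, rfl⟩
        simpa using ⟨h1, hs⟩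
      · rintro ⟨h1, h2⟩
        exact ⟨h1, t - (τ : ZMod n), h2, by ring⟩
    rcases hX t with h1 | h1 <;> rcases hY (t - (τ : ZMod n)) with h2 | h2
    · rw [h1, zero_mul, if_neg (fun hm => by have := (hmem.1 hm).1; omega)]
    · rw [h1, zero_mul, if_neg (fun hm => by have := (hmem.1 hm).1; omega)]
    · rw [h1, h2, mul_zero, if_neg (fun hm => by have := (hmem.1 hm).2; omega)]
    · rw [h1, h2, mul_one, if_pos (hmem.2 ⟨h1, h2⟩)]
  rw [Finset.sum_congr rfl (fun t _ => this t), Finset.sum_ite_mem, Finset.univ_inter,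
    Finset.sum_const, smul_eq_mul, mul_one]

lemma card_image_shift (B : Finset (ZMod n)) (τ : ZMod n) :
    (B.image (· + τ)).card = B.card :=
  Finset.card_image_of_injective _ (add_left_injective τ)

lemma Hcorr_le_one_iff {Δ : ℕ} {X Y : ZMod n → ℕ} (hX : IsSeq n 2 X) (hY : IsSeq n 2 Y) :
    Hcorr n Δ X Y ≤ 1 ↔ ∀ τ : ℕ, τ ≤ Δ → Iset n X ≠ (Iset n Y).image (· + (τ : ZMod n)) := by
  unfold Hcorr
  rw [Finset.sup_le_iff]
  constructor
  · intro h τ hτ heq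
    have h1 := h τ (Finset.mem_range.2 (by omega))
    rw [corr_eq_card hX.1 hY.1, ← heq, Finset.inter_self, hX.2] at h1
    omega
  · intro h τ hτ
    rw [Finset.mem_range] at hτ
    rw [corr_eq_card hX.1 hY.1]
    by_contra hc
    push_neg at hc
    have hsub : (Iset n X) ∩ (Iset n Y).image (· + (τ : ZMod n)) ⊆ Iset n X :=
      Finset.inter_subset_left
    have hXcard : (Iset n X).card = 2 := hX.2
    have heq1 : (Iset n X) ∩ (Iset n Y).image (· + (τ : ZMod n)) = Iset n X :=
      Finset.eq_of_subset_of_card_le hsub (by omega)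
    have hsub2 : (Iset n X) ∩ (Iset n Y).image (· + (τ : ZMod n)) ⊆
        (Iset n Y).image (· + (τ : ZMod n)) := Finset.inter_subset_right
    have hYcard : ((Iset n Y).image (· + (τ : ZMod n))).card = 2 := by
      rw [card_image_shift, hY.2]
    have heq2 : (Iset n X) ∩ (Iset n Y).image (· + (τ : ZMod n)) =
        (Iset n Y).image (· + (τ : ZMod n)) :=
      Finset.eq_of_subset_of_card_le hsub2 (by omega)
    exact h τ (by omega) (heq1 ▸ heq2)

/-- indicator sequence of a finset -/
def ind (n : ℕ) (A : Finset (ZMod n)) : ZMod n → ℕ := fun t => if t ∈ A then 1 else 0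

lemma ind_binary (A : Finset (ZMod n)) : ∀ i, ind n A i = 0 ∨ ind n A i = 1 := by
  intro i; unfold ind; split <;> simp

lemma Iset_ind (A : Finset (ZMod n)) : Iset n (ind n A) = A := by
  ext t
  rw [mem_Iset]
  unfold ind
  split <;> simp_all

lemma eq_ind {X : ZMod n → ℕ} (hX : ∀ i, X i = 0 ∨ X i = 1) : X = ind n (Iset n X) := by
  funext t
  unfold ind
  rcases hX t with h | h <;> rw [h] <;> split <;> rename_i hm <;>
    first
      | rfl
      | (rw [mem_Iset] at hm; omega)
      | (rw [mem_Iset] at *; simp_all)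

/-- Pair-set formulation of a PCAC code of weight 2. -/
def GoodP (n Δ : ℕ) (P : Finset (Finset (ZMod n))) : Prop :=
  (∀ A ∈ P, A.card = 2) ∧
  ∀ A ∈ P, ∀ B ∈ P, A ≠ B → ∀ τ : ℕ, τ ≤ Δ → A ≠ B.image (· + (τ : ZMod n))

lemma goodP_of_PCAC {Δ : ℕ} {C : Finset (ZMod n → ℕ)} (hC : IsPCAC n 2 Δ C) :
    GoodP n Δ (C.image (Iset n)) ∧ (C.image (Iset n)).card = C.card := by
  have hinj : Set.InjOn (Iset n) C := by
    intro X hX Y hY h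
    rw [eq_ind (hC.1 X hX).1, eq_ind (hC.1 Y hY).1, h]
  refine ⟨⟨?_, ?_⟩, Finset.card_image_of_injOn hinj⟩
  · rintro A hA
    obtain ⟨X, hX, rfl⟩ := Finset.mem_image.1 hA
    exact (hC.1 X hX).2
  · rintro A hA B hB hAB τ hτ heq
    obtain ⟨X, hX, rfl⟩ := Finset.mem_image.1 hA
    obtain ⟨Y, hY, rfl⟩ := Finset.mem_image.1 hB
    have hXY : X ≠ Y := fun h => hAB (h ▸ rfl)
    exact (Hcorr_le_one_iff (hC.1 X hX) (hC.1 Y hY)).1 (hC.2 X hX Y hY hXY) τ hτ heq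

lemma PCAC_of_goodP {Δ : ℕ} {P : Finset (Finset (ZMod n))} (hP : GoodP n Δ P) :
    IsPCAC n 2 Δ (P.image (ind n)) ∧ (P.image (ind n)).card = P.card := by
  have hinj : Set.InjOn (ind n) P := by
    intro A hA B hB h
    rw [← Iset_ind (n := n) A, ← Iset_ind (n := n) B, h]
  refine ⟨⟨?_, ?_⟩, Finset.card_image_of_injOn hinj⟩
  · rintro X hX
    obtain ⟨A, hA, rfl⟩ := Finset.mem_image.1 hX
    exact ⟨ind_binary A, by rw [Iset_ind]; exact hP.1 A hA⟩
  · rintro X hX Y hY hXY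
    obtain ⟨A, hA, rfl⟩ := Finset.mem_image.1 hX
    obtain ⟨B, hB, rfl⟩ := Finset.mem_image.1 hY
    have hAB : A ≠ B := fun h => hXY (h ▸ rfl)
    rw [Hcorr_le_one_iff ⟨ind_binary A, by rw [Iset_ind]; exact hP.1 A hA⟩
      ⟨ind_binary B, by rw [Iset_ind]; exact hP.1 B hB⟩]
    intro τ hτ
    rw [Iset_ind, Iset_ind]
    exact hP.2 A hA B hB hAB τ hτ

lemma Mpart_eq {Δ : ℕ} (v : ℕ)
    (hub : ∀ P : Finset (Finset (ZMod n)), GoodP n Δ P → P.card ≤ v)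
    (hex : ∃ P : Finset (Finset (ZMod n)), GoodP n Δ P ∧ P.card = v) :
    Mpart n 2 Δ = v := by
  have hub' : ∀ m ∈ {m | ∃ C : Finset (ZMod n → ℕ), IsPCAC n 2 Δ C ∧ C.card = m}, m ≤ v := by
    rintro m ⟨C, hC, rfl⟩
    obtain ⟨hG, hcard⟩ := goodP_of_PCAC hC
    rw [← hcard]
    exact hub _ hG
  have hmem : v ∈ {m | ∃ C : Finset (ZMod n → ℕ), IsPCAC n 2 Δ C ∧ C.card = m} := by
    obtain ⟨P, hP, hcard⟩ := hex
    obtain ⟨h1, h2⟩ := PCAC_of_goodP hP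
    exact ⟨P.image (ind n), h1, by rw [h2, hcard]⟩
  exact le_antisymm (csSup_le ⟨v, hmem⟩ hub') (le_csSup ⟨v, hub'⟩ hmem)

end Bridge

section UB
variable {n : ℕ} [NeZero n]

open scoped Classical in
noncomputable def clsOf (n : ℕ) (A : Finset (ZMod n)) : ℕ :=
  if h : ∃ d, (1 ≤ d ∧ d ≤ n / 2) ∧ ∃ a : ZMod n, A = {a, a + (d : ZMod n)} then
    h.choose else 0

lemma exists_cls {A : Finset (ZMod n)} (hA : A.card = 2) :
    ∃ d, (1 ≤ d ∧ d ≤ n / 2) ∧ ∃ a : ZMod n, A = {a, a + (d : ZMod n)} := by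
  obtain ⟨a, b, hab, rfl⟩ := Finset.card_eq_two.1 hA
  have hne : b - a ≠ 0 := sub_ne_zero.2 (Ne.symm hab)
  have hv1 : 1 ≤ (b - a).val := Nat.one_le_iff_ne_zero.2 (fun h => hne ((ZMod.val_eq_zero _).1 h))
  have hvlt : (b - a).val < n := ZMod.val_lt _
  by_cases hc : (b - a).val ≤ n / 2
  · refine ⟨(b - a).val, ⟨hv1, hc⟩, a, ?_⟩
    rw [ZMod.natCast_zmod_val]
    rw [add_sub_cancel]
  · refine ⟨n - (b - a).val, ⟨by omega, by omega⟩, b, ?_⟩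
    have : ((n - (b - a).val : ℕ) : ZMod n) = a - b := by
      push_cast [Nat.cast_sub hvlt.le]
      rw [ZMod.natCast_self, ZMod.natCast_zmod_val]
      ring
    rw [this, add_sub_cancel]
    exact Finset.pair_comm a b
lemma clsOf_spec {A : Finset (ZMod n)} (hA : A.card = 2) :
    (1 ≤ clsOf n A ∧ clsOf n A ≤ n / 2) ∧
      ∃ a : ZMod n, A = {a, a + (clsOf n A : ZMod n)} := by
  have h := exists_cls hA
  unfold clsOf
  rw [dif_pos h]
  exact h.choose_spec

/-- generic per-class bound: `|P_d| * (Δ+1) ≤ n` -/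
lemma UB_small {Δ d : ℕ} (hΔn : Δ < n) {P : Finset (Finset (ZMod n))}
    (hmem : ∀ A ∈ P, ∃ a : ZMod n, A = {a, a + (d : ZMod n)})
    (hgood : ∀ A ∈ P, ∀ B ∈ P, A ≠ B → ∀ τ : ℕ, τ ≤ Δ → A ≠ B.image (· + (τ : ZMod n))) :
    P.card * (Δ + 1) ≤ n := by
  classical
  set g : Finset (ZMod n) → ZMod n := fun A =>
    if h : ∃ a : ZMod n, A = {a, a + (d : ZMod n)} then h.choose else 0 with hg
  have hgA : ∀ A ∈ P, A = {g A, g A + (d : ZMod n)} := by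
    intro A hA
    have h := hmem A hA
    simp only [hg, dif_pos h]
    exact h.choose_spec
  have key : ∀ A ∈ P, ∀ B ∈ P, ∀ s t : ℕ, s ≤ Δ → t ≤ Δ →
      g A + (s : ZMod n) = g B + (t : ZMod n) → A = B ∧ s = t := by
    intro A hA B hB s t hs ht heq
    by_cases hAB : A = B
    · subst hAB
      have h3 : ((s : ℕ) : ZMod n) = ((t : ℕ) : ZMod n) := add_left_cancel heq
      exact ⟨rfl, cast_nat_inj (by omega) (by omega) h3⟩
    · exfalso
      rcases le_total s t with hst | hst
      · refine hgood A hA B hB hAB (t - s) (by omega) ?_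
        rw [hgA B hB, image_pair, hgA A hA]
        have h1 : g B + ((t - s : ℕ) : ZMod n) = g A := by
          rw [Nat.cast_sub hst]
          have : g A = g B + (t : ZMod n) - (s : ZMod n) := by
            rw [← heq]; ring
          rw [this]; ring
        rw [h1]
        congr 1
        rw [← h1]; ring
      · refine hgood B hB A hA (Ne.symm hAB) (s - t) (by omega) ?_
        rw [hgA A hA, image_pair, hgA B hB]
        have h1 : g A + ((s - t : ℕ) : ZMod n) = g B := by
          rw [Nat.cast_sub hst]
          have : g B = g A + (s : ZMod n) - (t : ZMod n) := by
            rw [heq]; ring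
          rw [this]; ring
        rw [h1]
        congr 1
        rw [← h1]; ring
  have hinj : Set.InjOn (fun p : Finset (ZMod n) × ℕ => g p.1 + (p.2 : ZMod n))
      ↑(P ×ˢ Finset.range (Δ + 1)) := by
    rintro ⟨A, s⟩ hAs ⟨B, t⟩ hBt heq
    simp only [Finset.mem_coe, Finset.mem_product, Finset.mem_range] at hAs hBt
    obtain ⟨h1, h2⟩ := key A hAs.1 B hBt.1 s t (by omega) (by omega) heq
    simp only [Prod.mk.injEq]
    exact ⟨h1, h2⟩
  have := Finset.card_le_card_of_injOn
    (t := (Finset.univ : Finset (ZMod n)))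
    (fun p : Finset (ZMod n) × ℕ => g p.1 + (p.2 : ZMod n))
    (fun _ _ => Finset.mem_univ _) hinj
  rwa [Finset.card_product, Finset.card_range, Finset.card_univ, ZMod.card] at this

end UB

section UB2
variable {n : ℕ} [NeZero n]

/-- half-class bound: `|P_{n/2}| * (2Δ+2) ≤ n` -/
lemma UB_half {Δ : ℕ} (hev : 2 * (n / 2) = n) (hΔ2 : 2 * Δ + 2 ≤ n)
    {P : Finset (Finset (ZMod n))}
    (hmem : ∀ A ∈ P, ∃ a : ZMod n, A = {a, a + ((n / 2 : ℕ) : ZMod n)})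
    (hgood : ∀ A ∈ P, ∀ B ∈ P, A ≠ B → ∀ τ : ℕ, τ ≤ Δ → A ≠ B.image (· + (τ : ZMod n))) :
    P.card * (2 * Δ + 2) ≤ n := by
  classical
  set m : ℕ := n / 2 with hm
  have hmcast : ((m : ℕ) : ZMod n) + ((m : ℕ) : ZMod n) = 0 := by
    rw [← Nat.cast_add]
    have : ((m + m : ℕ) : ZMod n) = ((n : ℕ) : ZMod n) := by
      congr 1; omega
    rw [this, ZMod.natCast_self]
  set g : Finset (ZMod n) → ZMod n := fun A =>
    if h : ∃ a : ZMod n, A = {a, a + ((m : ℕ) : ZMod n)} then h.choose else 0 with hg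
  have hgA : ∀ A ∈ P, A = {g A, g A + ((m : ℕ) : ZMod n)} := by
    intro A hA
    have h := hmem A hA
    simp only [hg, dif_pos h]
    exact h.choose_spec
  -- key structural fact : if g B + τ ∈ {g A, g A + m} then A = B.image (· + τ)
  have struct : ∀ A ∈ P, ∀ B ∈ P, ∀ τ : ZMod n,
      (g B + τ = g A ∨ g B + τ = g A + ((m : ℕ) : ZMod n)) →
      A = B.image (· + τ) := by
    intro A hA B hB τ hor
    rw [hgA B hB, image_pair, hgA A hA]
    rcases hor with h | h
    · rw [h]
      congr 1
      rw [← h]; ring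
    · rw [h]
      have h2 : g B + ((m : ℕ) : ZMod n) + τ = g A := by
        rw [← add_right_cancel_iff (a := ((m : ℕ) : ZMod n)), ← h]
        rw [add_assoc, add_assoc]
        congr 1
        rw [add_comm τ, ← add_assoc, hmcast, zero_add]
      rw [h2]
      exact Finset.pair_comm _ _
  have key : ∀ A ∈ P, ∀ B ∈ P, ∀ s t b c : ℕ, s ≤ Δ → t ≤ Δ → b ≤ 1 → c ≤ 1 →
      g A + (s : ZMod n) + (b : ZMod n) * ((m : ℕ) : ZMod n)
        = g B + (t : ZMod n) + (c : ZMod n) * ((m : ℕ) : ZMod n) →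
      A = B ∧ s = t ∧ b = c := by
    intro A hA B hB s t b c hs ht hb hc heq
    have heq' : g A + ((s + b * m : ℕ) : ZMod n) = g B + ((t + c * m : ℕ) : ZMod n) := by
      push_cast
      linear_combination heq
    by_cases hAB : A = B
    · subst hAB
      have h3 : ((s + b * m : ℕ) : ZMod n) = ((t + c * m : ℕ) : ZMod n) :=
        add_left_cancel heq'
      have h4 := cast_nat_inj (x := s + b * m) (y := t + c * m)
        (by nlinarith) (by nlinarith) h3
      have hbc : b = c ∧ s = t := by
        rcases Nat.le_one_iff_eq_zero_or_eq_one.1 hb with rfl | rfl <;>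
          rcases Nat.le_one_iff_eq_zero_or_eq_one.1 hc with rfl | rfl <;> omega
      exact ⟨rfl, hbc.2, hbc.1⟩
    · exfalso
      -- difference of the half-multiples is 0 or m
      have hmain : ∀ u v : ℕ, u ≤ 1 → v ≤ 1 →
          ((u : ZMod n) * ((m : ℕ) : ZMod n) - (v : ZMod n) * ((m : ℕ) : ZMod n) = 0 ∨
           (u : ZMod n) * ((m : ℕ) : ZMod n) - (v : ZMod n) * ((m : ℕ) : ZMod n)
             = ((m : ℕ) : ZMod n)) := by
        intro u v hu hv
        interval_cases u <;> interval_cases v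
        · left; push_cast; ring
        · right; push_cast; linear_combination -hmcast
        · right; push_cast; ring
        · left; push_cast; ring
      rcases le_total s t with hst | hst
      · refine hgood A hA B hB hAB (t - s) (by omega) (struct A hA B hB _ ?_)
        have h5 : g B + ((t - s : ℕ) : ZMod n) =
            g A + ((b : ZMod n) * ((m : ℕ) : ZMod n) - (c : ZMod n) * ((m : ℕ) : ZMod n)) := by
          rw [Nat.cast_sub hst]
          have : g A = g B + (t : ZMod n) + (c : ZMod n) * ((m : ℕ) : ZMod n)
              - (s : ZMod n) - (b : ZMod n) * ((m : ℕ) : ZMod n) := by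
            rw [← heq]; ring
          rw [this]; ring
        rcases hmain b c (by omega) (by omega) with h6 | h6
        · left; rw [h5, h6, add_zero]
        · right; rw [h5, h6]
      · refine (hgood B hB A hA (Ne.symm hAB) (s - t) (by omega)
          (struct B hB A hA _ ?_)).elim
        have h5 : g A + ((s - t : ℕ) : ZMod n) =
            g B + ((c : ZMod n) * ((m : ℕ) : ZMod n) - (b : ZMod n) * ((m : ℕ) : ZMod n)) := by
          rw [Nat.cast_sub hst]
          have : g B = g A + (s : ZMod n) + (b : ZMod n) * ((m : ℕ) : ZMod n)
              - (t : ZMod n) - (c : ZMod n) * ((m : ℕ) : ZMod n) := by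
            rw [heq]; ring
          rw [this]; ring
        rcases hmain c b (by omega) (by omega) with h6 | h6
        · left; rw [h5, h6, add_zero]
        · right; rw [h5, h6]
  have hinj : Set.InjOn
      (fun p : (Finset (ZMod n) × ℕ) × ℕ =>
        g p.1.1 + (p.1.2 : ZMod n) + (p.2 : ZMod n) * ((m : ℕ) : ZMod n))
      ↑((P ×ˢ Finset.range (Δ + 1)) ×ˢ Finset.range 2) := by
    rintro ⟨⟨A, s⟩, b⟩ hAs ⟨⟨B, t⟩, c⟩ hBt heq
    simp only [Finset.mem_coe, Finset.mem_product, Finset.mem_range] at hAs hBt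
    obtain ⟨h1, h2, h3⟩ := key A hAs.1.1 B hBt.1.1 s t b c
      (by omega) (by omega) (by omega) (by omega) heq
    simp only [Prod.mk.injEq]
    exact ⟨⟨h1, h2⟩, h3⟩
  have hcard := Finset.card_le_card_of_injOn
    (t := (Finset.univ : Finset (ZMod n)))
    (fun p : (Finset (ZMod n) × ℕ) × ℕ =>
      g p.1.1 + (p.1.2 : ZMod n) + (p.2 : ZMod n) * ((m : ℕ) : ZMod n))
    (fun _ _ => Finset.mem_univ _) hinj
  rw [Finset.card_product, Finset.card_product, Finset.card_range, Finset.card_range,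
    Finset.card_univ, ZMod.card] at hcard
  nlinarith

/-- when `Δ ≥ n/2`, each class contains at most one codeword -/
lemma UB_one {Δ d : ℕ} (hΔn : Δ < n) (hΔ : n / 2 ≤ Δ)
    {P : Finset (Finset (ZMod n))}
    (hmem : ∀ A ∈ P, ∃ a : ZMod n, A = {a, a + ((d : ℕ) : ZMod n)})
    (hgood : ∀ A ∈ P, ∀ B ∈ P, A ≠ B → ∀ τ : ℕ, τ ≤ Δ → A ≠ B.image (· + (τ : ZMod n))) :
    P.card ≤ 1 := by
  classical
  by_contra hc
  push_neg at hc
  obtain ⟨A, hA, B, hB, hAB⟩ := Finset.one_lt_card.1 hc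
  set g : Finset (ZMod n) → ZMod n := fun A =>
    if h : ∃ a : ZMod n, A = {a, a + ((d : ℕ) : ZMod n)} then h.choose else 0 with hg
  have hgA : ∀ A ∈ P, A = {g A, g A + ((d : ℕ) : ZMod n)} := by
    intro A hA
    have h := hmem A hA
    simp only [hg, dif_pos h]
    exact h.choose_spec
  have struct : ∀ A' ∈ P, ∀ B' ∈ P, ∀ τ : ZMod n, g B' + τ = g A' →
      A' = B'.image (· + τ) := by
    intro A' hA' B' hB' τ h
    rw [hgA B' hB', image_pair, hgA A' hA', h]
    congr 1
    rw [← h]; ring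
  set δ : ZMod n := g A - g B with hδ
  by_cases hv : δ.val ≤ Δ
  · refine hgood A hA B hB hAB δ.val hv (struct A hA B hB _ ?_)
    rw [ZMod.natCast_zmod_val, hδ]; ring
  · have hvlt : δ.val < n := ZMod.val_lt _
    refine hgood B hB A hA (Ne.symm hAB) (n - δ.val) (by omega) (struct B hB A hA _ ?_)
    have : ((n - δ.val : ℕ) : ZMod n) = -δ := by
      push_cast [Nat.cast_sub hvlt.le]
      rw [ZMod.natCast_self, ZMod.natCast_zmod_val]
      ring
    rw [this, hδ]; ring

end UB2

section Totals
variable {n : ℕ} [NeZero n]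

lemma fiber_mem {Δ : ℕ} {P : Finset (Finset (ZMod n))} (hP : GoodP n Δ P) (d : ℕ) :
    ∀ A ∈ P.filter (fun A => clsOf n A = d), ∃ a : ZMod n, A = {a, a + (d : ZMod n)} := by
  intro A hA
  rw [Finset.mem_filter] at hA
  obtain ⟨a, ha⟩ := (clsOf_spec (hP.1 A hA.1)).2
  exact ⟨a, by rw [← hA.2]; exact ha⟩

lemma fiber_good {Δ : ℕ} {P : Finset (Finset (ZMod n))} (hP : GoodP n Δ P) (d : ℕ) :
    ∀ A ∈ P.filter (fun A => clsOf n A = d), ∀ B ∈ P.filter (fun A => clsOf n A = d),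
      A ≠ B → ∀ τ : ℕ, τ ≤ Δ → A ≠ B.image (· + (τ : ZMod n)) := by
  intro A hA B hB hAB τ hτ
  rw [Finset.mem_filter] at hA hB
  exact hP.2 A hA.1 B hB.1 hAB τ hτ

lemma card_le_sum_classes {Δ : ℕ} {P : Finset (Finset (ZMod n))} (hP : GoodP n Δ P)
    (F : ℕ → ℕ)
    (hF : ∀ d ∈ Finset.Icc 1 (n / 2),
      (P.filter (fun A => clsOf n A = d)).card ≤ F d) :
    P.card ≤ ∑ d ∈ Finset.Icc 1 (n / 2), F d := by
  rw [Finset.card_eq_sum_card_fiberwise (f := clsOf n) (t := Finset.Icc 1 (n / 2))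
    (fun A hA => Finset.mem_Icc.2 (clsOf_spec (hP.1 A hA)).1)]
  exact Finset.sum_le_sum hF

lemma total_UB_generic {Δ : ℕ} (hΔn : Δ < n) {P : Finset (Finset (ZMod n))}
    (hP : GoodP n Δ P) : P.card ≤ (n / 2) * (n / (Δ + 1)) := by
  have h := card_le_sum_classes hP (fun _ => n / (Δ + 1)) (fun d _ => by
    have := UB_small hΔn (fiber_mem hP d) (fiber_good hP d)
    exact (Nat.le_div_iff_mul_le (by omega)).2 this)
  rwa [Finset.sum_const, Nat.card_Icc, smul_eq_mul, Nat.add_sub_cancel] at h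

lemma total_UB_even {Δ : ℕ} (hΔn : Δ < n) (hn : 3 ≤ n) (hev : 2 * (n / 2) = n)
    (hΔ2 : 2 * Δ + 2 ≤ n) {P : Finset (Finset (ZMod n))}
    (hP : GoodP n Δ P) :
    P.card ≤ (n / 2 - 1) * (n / (Δ + 1)) + n / (2 * Δ + 2) := by
  have h := card_le_sum_classes hP
    (fun d => if d = n / 2 then n / (2 * Δ + 2) else n / (Δ + 1)) (fun d hd => by
      rw [Finset.mem_Icc] at hd
      by_cases hdn : d = n / 2
      · rw [if_pos hdn]
        subst hdn
        have := UB_half hev hΔ2 (fiber_mem hP (n / 2)) (fiber_good hP (n / 2))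
        exact (Nat.le_div_iff_mul_le (by omega)).2 this
      · rw [if_neg hdn]
        have := UB_small hΔn (fiber_mem hP d) (fiber_good hP d)
        exact (Nat.le_div_iff_mul_le (by omega)).2 this)
  have hsplit : n / 2 = (n / 2 - 1) + 1 := by omega
  rw [hsplit, Finset.sum_Icc_succ_top (by omega)] at h
  rw [if_pos rfl] at h
  have hsum : ∑ d ∈ Finset.Icc 1 (n / 2 - 1),
      (if d = n / 2 - 1 + 1 then n / (2 * Δ + 2) else n / (Δ + 1)) =
      ∑ d ∈ Finset.Icc 1 (n / 2 - 1), n / (Δ + 1) := by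
    apply Finset.sum_congr rfl
    intro d hd
    rw [Finset.mem_Icc] at hd
    rw [if_neg (by omega)]
  rw [hsum, Finset.sum_const, Nat.card_Icc, smul_eq_mul] at h
  calc P.card ≤ (n / 2 - 1 + 1 - 1) * (n / (Δ + 1)) + n / (2 * Δ + 2) := h
    _ = (n / 2 - 1) * (n / (Δ + 1)) + n / (2 * Δ + 2) := by rw [Nat.add_sub_cancel]

lemma total_UB_large {Δ : ℕ} (hΔn : Δ < n) (hΔ : n / 2 ≤ Δ)
    {P : Finset (Finset (ZMod n))} (hP : GoodP n Δ P) : P.card ≤ n / 2 := by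
  have h := card_le_sum_classes hP (fun _ => 1) (fun d _ =>
    UB_one hΔn hΔ (fiber_mem hP d) (fiber_good hP d))
  rwa [Finset.sum_const, Nat.card_Icc, smul_eq_mul, mul_one, Nat.add_sub_cancel] at h

end Totals

section LB
variable {n : ℕ} [NeZero n]

lemma modeq_lin {N a b : ℕ} (ha : a < 2 * N) (hb : b < 2 * N) (h : a % N = b % N) :
    a = b ∨ a + N = b ∨ b + N = a := by
  by_cases ha' : a < N
  · by_cases hb' : b < N
    · left; rwa [Nat.mod_eq_of_lt ha', Nat.mod_eq_of_lt hb'] at h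
    · right; left
      rw [Nat.mod_eq_of_lt ha', Nat.mod_eq_sub_mod (by omega),
        Nat.mod_eq_of_lt (by omega)] at h
      omega
  · by_cases hb' : b < N
    · right; right
      rw [Nat.mod_eq_sub_mod (by omega), Nat.mod_eq_of_lt (by omega),
        Nat.mod_eq_of_lt hb'] at h
      omega
    · left
      rw [Nat.mod_eq_sub_mod (show N ≤ a by omega), Nat.mod_eq_sub_mod (show N ≤ b by omega),
        Nat.mod_eq_of_lt (by omega), Nat.mod_eq_of_lt (by omega)] at h
      omega

/-- the 2-subset `{x, x+d}` of `Z_n`, from natural-number data -/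
def pr (n x d : ℕ) : Finset (ZMod n) := {((x : ℕ) : ZMod n), ((x + d : ℕ) : ZMod n)}

lemma pr_eq_iff {x d y e : ℕ} : pr n x d = pr n y e ↔
    ((x % n = y % n ∧ (x + d) % n = (y + e) % n) ∨
     (x % n = (y + e) % n ∧ (x + d) % n = y % n)) := pair_cast_eq_iff

lemma pr_card {x d : ℕ} (hx : x < n) (hd : 1 ≤ d) (hdn : d < n) : (pr n x d).card = 2 := by
  refine Finset.card_pair (fun hc => ?_)
  rw [ZMod.natCast_eq_natCast_iff'] at hc
  have := modeq_lin (by omega) (by omega) hc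
  omega

lemma pr_shift (y e τ : ℕ) : (pr n y e).image (· + (τ : ZMod n)) = pr n (y + τ) e := by
  unfold pr
  rw [image_pair]
  have h1 : ((y : ℕ) : ZMod n) + (τ : ZMod n) = ((y + τ : ℕ) : ZMod n) := by push_cast; ring
  have h2 : ((y + e : ℕ) : ZMod n) + (τ : ZMod n) = ((y + τ + e : ℕ) : ZMod n) := by
    push_cast; ring
  rw [h1, h2]

lemma gap_eq {x d y e : ℕ} (hx : x < n) (hy : y < n) (hd : 1 ≤ d) (hdn : d < n)
    (he : 1 ≤ e) (hen : e < n) (hsum : d + e ≠ n) (h : pr n x d = pr n y e) : d = e := by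
  rw [pr_eq_iff] at h
  rcases h with ⟨h1, h2⟩ | ⟨h1, h2⟩ <;>
    [skip; skip] <;>
    · have e1 := modeq_lin (N := n) (by omega) (by omega) h1
      have e2 := modeq_lin (N := n) (by omega) (by omega) h2
      omega

lemma main_main {Δ M d d' j j' τ : ℕ} (hΔn : Δ < n) (hM2 : 2 * M + 1 ≤ n)
    (hd : 1 ≤ d ∧ d ≤ M) (hd' : 1 ≤ d' ∧ d' ≤ M)
    (hj : j < n / (Δ + 1)) (hj' : j' < n / (Δ + 1)) (hτ : τ ≤ Δ)
    (h : pr n (j * (Δ + 1)) d = pr n (j' * (Δ + 1) + τ) d') : d = d' ∧ j = j' := by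
  have hdl := Nat.div_mul_le_self n (Δ + 1)
  have hxb : j * (Δ + 1) + (Δ + 1) ≤ n := by
    calc j * (Δ + 1) + (Δ + 1) = (j + 1) * (Δ + 1) := by ring
    _ ≤ (n / (Δ + 1)) * (Δ + 1) := Nat.mul_le_mul_right _ (by omega)
    _ ≤ n := hdl
  have hyb : j' * (Δ + 1) + (Δ + 1) ≤ n := by
    calc j' * (Δ + 1) + (Δ + 1) = (j' + 1) * (Δ + 1) := by ring
    _ ≤ (n / (Δ + 1)) * (Δ + 1) := Nat.mul_le_mul_right _ (by omega)
    _ ≤ n := hdl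
  rw [pr_eq_iff] at h
  rcases Nat.lt_trichotomy j j' with hjj | hjj | hjj
  · exfalso
    have hlt : j * (Δ + 1) + (Δ + 1) ≤ j' * (Δ + 1) :=
      calc j * (Δ + 1) + (Δ + 1) = (j + 1) * (Δ + 1) := by ring
      _ ≤ j' * (Δ + 1) := Nat.mul_le_mul_right _ (by omega)
    generalize j * (Δ + 1) = x at h hxb hlt
    generalize j' * (Δ + 1) = y at h hyb hlt
    rcases h with ⟨h1, h2⟩ | ⟨h1, h2⟩ <;>
      · have e1 := modeq_lin (N := n) (by omega) (by omega) h1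
        have e2 := modeq_lin (N := n) (by omega) (by omega) h2
        omega
  · subst hjj
    refine ⟨?_, rfl⟩
    generalize j * (Δ + 1) = x at h hxb
    rcases h with ⟨h1, h2⟩ | ⟨h1, h2⟩ <;>
      · have e1 := modeq_lin (N := n) (by omega) (by omega) h1
        have e2 := modeq_lin (N := n) (by omega) (by omega) h2
        omega
  · exfalso
    have hlt : j' * (Δ + 1) + (Δ + 1) ≤ j * (Δ + 1) :=
      calc j' * (Δ + 1) + (Δ + 1) = (j' + 1) * (Δ + 1) := by ring
      _ ≤ j * (Δ + 1) := Nat.mul_le_mul_right _ (by omega)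
    generalize j * (Δ + 1) = x at h hxb hlt
    generalize j' * (Δ + 1) = y at h hyb hlt
    rcases h with ⟨h1, h2⟩ | ⟨h1, h2⟩ <;>
      · have e1 := modeq_lin (N := n) (by omega) (by omega) h1
        have e2 := modeq_lin (N := n) (by omega) (by omega) h2
        omega

lemma halfbound {Δ j : ℕ} (hj : j < n / (2 * Δ + 2)) :
    j * (Δ + 1) + (Δ + 1) ≤ n / 2 := by
  have hdl := Nat.div_mul_le_self n (2 * Δ + 2)
  have h1 : (j + 1) * (2 * Δ + 2) ≤ (n / (2 * Δ + 2)) * (2 * Δ + 2) :=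
    Nat.mul_le_mul_right _ (by omega)
  have h2 : (j + 1) * (2 * Δ + 2) ≤ n := le_trans h1 hdl
  have h3 : 2 * (j * (Δ + 1) + (Δ + 1)) = (j + 1) * (2 * Δ + 2) := by ring
  omega

lemma half_half {Δ j j' τ : ℕ} (hev : 2 * (n / 2) = n) (hΔ2 : 2 * Δ + 2 ≤ n)
    (hj : j < n / (2 * Δ + 2)) (hj' : j' < n / (2 * Δ + 2)) (hτ : τ ≤ Δ)
    (h : pr n (j * (Δ + 1)) (n / 2) = pr n (j' * (Δ + 1) + τ) (n / 2)) : j = j' := by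
  have hxb := halfbound (n := n) hj
  have hyb := halfbound (n := n) hj'
  rw [pr_eq_iff] at h
  rcases Nat.lt_trichotomy j j' with hjj | hjj | hjj
  · exfalso
    have hlt : j * (Δ + 1) + (Δ + 1) ≤ j' * (Δ + 1) :=
      calc j * (Δ + 1) + (Δ + 1) = (j + 1) * (Δ + 1) := by ring
      _ ≤ j' * (Δ + 1) := Nat.mul_le_mul_right _ (by omega)
    generalize j * (Δ + 1) = x at h hxb hlt
    generalize j' * (Δ + 1) = y at h hyb hlt
    rcases h with ⟨h1, h2⟩ | ⟨h1, h2⟩ <;>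
      · have e1 := modeq_lin (N := n) (by omega) (by omega) h1
        have e2 := modeq_lin (N := n) (by omega) (by omega) h2
        omega
  · exact hjj
  · exfalso
    have hlt : j' * (Δ + 1) + (Δ + 1) ≤ j * (Δ + 1) :=
      calc j' * (Δ + 1) + (Δ + 1) = (j' + 1) * (Δ + 1) := by ring
      _ ≤ j * (Δ + 1) := Nat.mul_le_mul_right _ (by omega)
    generalize j * (Δ + 1) = x at h hxb hlt
    generalize j' * (Δ + 1) = y at h hyb hlt
    rcases h with ⟨h1, h2⟩ | ⟨h1, h2⟩ <;>
      · have e1 := modeq_lin (N := n) (by omega) (by omega) h1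
        have e2 := modeq_lin (N := n) (by omega) (by omega) h2
        omega

end LB

section Fam
variable {n : ℕ} [NeZero n]

def mainFam (n Δ M : ℕ) : Finset (Finset (ZMod n)) :=
  ((Finset.Icc 1 M) ×ˢ Finset.range (n / (Δ + 1))).image (fun p => pr n (p.2 * (Δ + 1)) p.1)

def halfFam (n Δ : ℕ) : Finset (Finset (ZMod n)) :=
  (Finset.range (n / (2 * Δ + 2))).image (fun j => pr n (j * (Δ + 1)) (n / 2))

def largeFam (n : ℕ) : Finset (Finset (ZMod n)) :=
  (Finset.Icc 1 (n / 2)).image (fun d => pr n 0 d)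

lemma mem_mainFam {Δ M : ℕ} {A : Finset (ZMod n)} :
    A ∈ mainFam n Δ M ↔ ∃ d j, (1 ≤ d ∧ d ≤ M) ∧ j < n / (Δ + 1) ∧
      A = pr n (j * (Δ + 1)) d := by
  simp only [mainFam, Finset.mem_image, Finset.mem_product, Finset.mem_Icc, Finset.mem_range,
    Prod.exists]
  constructor
  · rintro ⟨d, j, ⟨h1, h2⟩, rfl⟩
    exact ⟨d, j, h1, h2, rfl⟩
  · rintro ⟨d, j, h1, h2, rfl⟩
    exact ⟨d, j, ⟨h1, h2⟩, rfl⟩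

lemma mem_halfFam {Δ : ℕ} {A : Finset (ZMod n)} :
    A ∈ halfFam n Δ ↔ ∃ j, j < n / (2 * Δ + 2) ∧ A = pr n (j * (Δ + 1)) (n / 2) := by
  simp only [halfFam, Finset.mem_image, Finset.mem_range]
  tauto

lemma mainFam_xlt {Δ j : ℕ} (hj : j < n / (Δ + 1)) : j * (Δ + 1) + (Δ + 1) ≤ n := by
  have hdl := Nat.div_mul_le_self n (Δ + 1)
  calc j * (Δ + 1) + (Δ + 1) = (j + 1) * (Δ + 1) := by ring
  _ ≤ (n / (Δ + 1)) * (Δ + 1) := Nat.mul_le_mul_right _ (by omega)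
  _ ≤ n := hdl

lemma mainFam_card {Δ M : ℕ} (hΔn : Δ < n) (hM2 : 2 * M + 1 ≤ n) :
    (mainFam n Δ M).card = M * (n / (Δ + 1)) := by
  rw [mainFam, Finset.card_image_of_injOn, Finset.card_product, Nat.card_Icc,
    Finset.card_range, Nat.add_sub_cancel]
  rintro ⟨d, j⟩ hp ⟨d', j'⟩ hq heq
  simp only [Finset.mem_coe, Finset.mem_product, Finset.mem_Icc, Finset.mem_range] at hp hq
  have h0 : pr n (j * (Δ + 1)) d = pr n (j' * (Δ + 1) + 0) d' := by
    rw [Nat.add_zero]; exact heq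
  obtain ⟨h1, h2⟩ := main_main hΔn hM2 hp.1 hq.1 hp.2 hq.2 (Nat.zero_le Δ) h0
  simp only [Prod.mk.injEq]
  exact ⟨h1, h2⟩

lemma mainFam_good {Δ M : ℕ} (hΔn : Δ < n) (hM2 : 2 * M + 1 ≤ n) :
    GoodP n Δ (mainFam n Δ M) := by
  constructor
  · intro A hA
    obtain ⟨d, j, hd, hj, rfl⟩ := mem_mainFam.1 hA
    exact pr_card (by have := mainFam_xlt (n := n) hj; omega) hd.1 (by omega)
  · intro A hA B hB hAB τ hτ heq
    obtain ⟨d, j, hd, hj, rfl⟩ := mem_mainFam.1 hA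
    obtain ⟨d', j', hd', hj', rfl⟩ := mem_mainFam.1 hB
    rw [pr_shift] at heq
    obtain ⟨h1, h2⟩ := main_main hΔn hM2 hd hd' hj hj' hτ heq
    exact hAB (by rw [h1, h2])

lemma halfFam_card {Δ : ℕ} (hev : 2 * (n / 2) = n) (hΔ2 : 2 * Δ + 2 ≤ n) :
    (halfFam n Δ).card = n / (2 * Δ + 2) := by
  rw [halfFam, Finset.card_image_of_injOn, Finset.card_range]
  intro j hj j' hj' heq
  simp only [Finset.mem_coe, Finset.mem_range] at hj hj'
  have h0 : pr n (j * (Δ + 1)) (n / 2) = pr n (j' * (Δ + 1) + 0) (n / 2) := by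
    rw [Nat.add_zero]; exact heq
  exact half_half hev hΔ2 hj hj' (Nat.zero_le Δ) h0

lemma evenFam_good {Δ : ℕ} (hev : 2 * (n / 2) = n) (hn : 3 ≤ n) (hΔn : Δ < n)
    (hΔ2 : 2 * Δ + 2 ≤ n) :
    GoodP n Δ (mainFam n Δ (n / 2 - 1) ∪ halfFam n Δ) := by
  have hM2 : 2 * (n / 2 - 1) + 1 ≤ n := by omega
  constructor
  · intro A hA
    rcases Finset.mem_union.1 hA with hA | hA
    · exact (mainFam_good hΔn hM2).1 A hA
    · obtain ⟨j, hj, rfl⟩ := mem_halfFam.1 hA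
      exact pr_card (by have := halfbound (n := n) hj; omega) (by omega) (by omega)
  · intro A hA B hB hAB τ hτ heq
    rcases Finset.mem_union.1 hA with hA' | hA' <;> rcases Finset.mem_union.1 hB with hB' | hB'
    · exact (mainFam_good hΔn hM2).2 A hA' B hB' hAB τ hτ heq
    · obtain ⟨d, j, hd, hj, rfl⟩ := mem_mainFam.1 hA'
      obtain ⟨j', hj', rfl⟩ := mem_halfFam.1 hB'
      rw [pr_shift] at heq
      have hx := mainFam_xlt (n := n) hj
      have hy := halfbound (n := n) hj'
      have := gap_eq (by omega) (by omega) hd.1 (by omega) (by omega) (by omega)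
        (by omega) heq
      omega
    · obtain ⟨j, hj, rfl⟩ := mem_halfFam.1 hA'
      obtain ⟨d', j', hd', hj', rfl⟩ := mem_mainFam.1 hB'
      rw [pr_shift] at heq
      have hx := halfbound (n := n) hj
      have hy := mainFam_xlt (n := n) hj'
      have := gap_eq (by omega) (by omega) (by omega) (by omega) hd'.1 (by omega)
        (by omega) heq
      omega
    · obtain ⟨j, hj, rfl⟩ := mem_halfFam.1 hA'
      obtain ⟨j', hj', rfl⟩ := mem_halfFam.1 hB'
      rw [pr_shift] at heq
      have := half_half hev hΔ2 hj hj' hτ heq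
      exact hAB (by rw [this])

lemma evenFam_card {Δ : ℕ} (hev : 2 * (n / 2) = n) (hn : 3 ≤ n) (hΔn : Δ < n)
    (hΔ2 : 2 * Δ + 2 ≤ n) :
    (mainFam n Δ (n / 2 - 1) ∪ halfFam n Δ).card
      = (n / 2 - 1) * (n / (Δ + 1)) + n / (2 * Δ + 2) := by
  have hM2 : 2 * (n / 2 - 1) + 1 ≤ n := by omega
  have hdisj : Disjoint (mainFam n Δ (n / 2 - 1)) (halfFam n Δ) := by
    rw [Finset.disjoint_left]
    intro A hA hB
    obtain ⟨d, j, hd, hj, rfl⟩ := mem_mainFam.1 hA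
    obtain ⟨j', hj', heq⟩ := mem_halfFam.1 hB
    have hx := mainFam_xlt (n := n) hj
    have hy := halfbound (n := n) hj'
    have := gap_eq (by omega) (by omega) hd.1 (by omega) (by omega) (by omega)
      (by omega) heq
    omega
  rw [Finset.card_union_of_disjoint hdisj, mainFam_card hΔn hM2, halfFam_card hev hΔ2]

lemma largeFam_good {Δ : ℕ} (hn : 3 ≤ n) (hΔn : Δ < n) : GoodP n Δ (largeFam n) := by
  constructor
  · intro A hA
    obtain ⟨d, hd, rfl⟩ := Finset.mem_image.1 hA
    rw [Finset.mem_Icc] at hd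
    exact pr_card (by omega) (by omega) (by omega)
  · intro A hA B hB hAB τ hτ heq
    obtain ⟨d, hd, rfl⟩ := Finset.mem_image.1 hA
    obtain ⟨e, he, rfl⟩ := Finset.mem_image.1 hB
    rw [Finset.mem_Icc] at hd he
    rw [pr_shift] at heq
    rw [pr_eq_iff] at heq
    apply hAB
    have hde : d = e := by
      rcases heq with ⟨h1, h2⟩ | ⟨h1, h2⟩ <;>
        · have e1 := modeq_lin (N := n) (by omega) (by omega) h1
          have e2 := modeq_lin (N := n) (by omega) (by omega) h2
          omega
    rw [hde]

lemma largeFam_card (hn : 3 ≤ n) : (largeFam n).card = n / 2 := by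
  rw [largeFam, Finset.card_image_of_injOn, Nat.card_Icc, Nat.add_sub_cancel]
  intro d hd e he heq
  simp only [Finset.mem_coe, Finset.mem_Icc] at hd he
  rw [pr_eq_iff] at heq
  rcases heq with ⟨h1, h2⟩ | ⟨h1, h2⟩ <;>
    · have e1 := modeq_lin (N := n) (by omega) (by omega) h1
      have e2 := modeq_lin (N := n) (by omega) (by omega) h2
      omega

end Fam

/-- The exact value of `M_Δ(n,2)` in the three cases. -/
theorem Mpart_weight_two (n Δ : ℕ) (hn : 3 ≤ n) (hΔ : Δ < n) :
    (Odd n → Δ ≤ (n - 3) / 2 →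
      Mpart n 2 Δ = ((n - 1) / 2) * (n / (Δ + 1))) ∧
    (Even n → Δ ≤ (n - 2) / 2 →
      Mpart n 2 Δ = (n / 2 - 1) * (n / (Δ + 1)) + n / (2 * Δ + 2)) ∧
    (n / 2 ≤ Δ → Mpart n 2 Δ = n / 2) := by
  haveI : NeZero n := ⟨by omega⟩
  refine ⟨?_, ?_, ?_⟩
  · intro hodd _
    have hmod : n % 2 = 1 := Nat.odd_iff.1 hodd
    apply Mpart_eq
    · intro P hP
      have h := total_UB_generic hΔ hP
      have : n / 2 = (n - 1) / 2 := by omega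
      rwa [this] at h
    · have hM2 : 2 * ((n - 1) / 2) + 1 ≤ n := by omega
      exact ⟨mainFam n Δ ((n - 1) / 2), mainFam_good hΔ hM2, mainFam_card hΔ hM2⟩
  · intro heven hΔ2'
    have hmod : n % 2 = 0 := Nat.even_iff.1 heven
    have hev : 2 * (n / 2) = n := by omega
    have hΔ2 : 2 * Δ + 2 ≤ n := by omega
    apply Mpart_eq
    · intro P hP
      exact total_UB_even hΔ hn hev hΔ2 hP
    · exact ⟨mainFam n Δ (n / 2 - 1) ∪ halfFam n Δ, evenFam_good hev hn hΔ hΔ2,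
        evenFam_card hev hn hΔ hΔ2⟩
  · intro hΔ3
    apply Mpart_eq
    · intro P hP
      exact total_UB_large hΔ hΔ3 hP
    · exact ⟨largeFam n, largeFam_good hn hΔ, largeFam_card hn⟩
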